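/- If Γ ⊂ 𝒫¹(S) is tight (for each ε > 0 there is a compact set K ⊂ S with P(S∖K) < ε for every P ∈ Γ), then μ_{H,W}(Γ) ≤ μ_UI(Γ); consequently, for tight Γ, μ_{H,W}(Γ) = μ_UI(Γ). -/

import Mathlib

open MeasureTheory Filter

/-- The Wasserstein metric via Kantorovich duality. -/
noncomputable def W {S : Type*} [MetricSpace S] [MeasurableSpace S]
    (P Q : Measure S) : ℝ :=
  sSup {r : ℝ | ∃ f : S → ℝ, LipschitzWith 1 f ∧ r = |(∫ x, f x ∂P) - ∫ x, f x ∂Q|}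

/-- `𝒫¹(S)`: Borel probability measures on `S` with finite first moment. -/
def P1 (S : Type*) [MetricSpace S] [MeasurableSpace S] : Set (Measure S) :=
  {P | IsProbabilityMeasure P ∧ ∀ a : S, Integrable (fun x => dist a x) P}

/-- The relative Hausdorff measure of non-compactness for the Wasserstein metric:
`μ_{H,W}(Γ) = inf_{Φ ⊆ 𝒫¹(S) finite nonempty} sup_{P ∈ Γ} inf_{Q ∈ Φ} W(P,Q)`. -/
noncomputable def muHW {S : Type*} [MetricSpace S] [MeasurableSpace S]
    (Γ : Set (Measure S)) : ℝ :=
  sInf {r : ℝ | ∃ Φ : Finset (Measure S), Φ.Nonempty ∧ ↑Φ ⊆ P1 S ∧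
    r = sSup {s : ℝ | ∃ P ∈ Γ, s = sInf {t : ℝ | ∃ Q ∈ Φ, t = W P Q}}}

/-- The measure of non-uniform integrability:
`μ_UI(Γ) = inf_{a ∈ S} inf_{B ⊆ S bounded} sup_{P ∈ Γ} ∫_{S∖B} d(a,·) dP`. -/
noncomputable def muUI {S : Type*} [MetricSpace S] [MeasurableSpace S]
    (Γ : Set (Measure S)) : ℝ :=
  sInf {r : ℝ | ∃ a : S, ∃ B : Set S, Bornology.IsBounded B ∧
    r = sSup {s : ℝ | ∃ P ∈ Γ, s = ∫ x in Bᶜ, dist a x ∂P}}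

/-!
If the first moments `∫ d(a₀,·) dP`, `P ∈ Γ`, are unbounded, then so is the supremum in
`muHW Γ` for `Φ = {δ_{a₀}}` and the one in `muUI Γ` for `(a₀, ∅)`; both quantities then collapse
to the junk value `0` of `sSup`. Otherwise all these suprema are genuine.

`muUI Γ ≤ muHW Γ` needs no tightness. If every `P ∈ Γ` is within `ρ` of a finite `Φ ⊆ 𝒫¹(S)`,
choose `n` with `∫ (d(a,·) - n)⁺ dQ ≤ ε` for all `Q ∈ Φ`; this integrand is `1`-Lipschitz, so
`∫ (d(a,·) - n)⁺ dP ≤ ρ + ε`, and far enough from `a` the function `d(a,·)` is at most `c > 1`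
times the integrand.

For `muHW Γ ≤ muUI Γ`, enclose the bounded set `B` in `closedBall a R` and choose a compact `K`
carrying all but `ε / (R + 1)` of every `P ∈ Γ`. Sending each point to its nearest neighbour
among `a` and the centres of a finite `ε`-cover of `K` moves `P` by at most
`2ε + ∫_{Bᶜ} d(a,·) dP` in `W`. The images all live on one finite set, where `W` is controlled
by the differences of the point masses, so finitely many of them form an `ε`-net.
-/

open Metric Set Topology

section Wasserstein

variable {S : Type*} [MetricSpace S] [MeasurableSpace S]

lemma W_nonneg (P Q : Measure S) : 0 ≤ W P Q :=
  Real.sSup_nonneg <| by rintro _ ⟨f, -, rfl⟩; exact abs_nonneg _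

lemma W_le_of_forall {P Q : Measure S} {c : ℝ} (hc : 0 ≤ c)
    (h : ∀ f : S → ℝ, LipschitzWith 1 f → |(∫ x, f x ∂P) - ∫ x, f x ∂Q| ≤ c) :
    W P Q ≤ c :=
  Real.sSup_le (by rintro _ ⟨f, hf, rfl⟩; exact h f hf) hc

variable [OpensMeasurableSpace S]

lemma LipschitzWith.integrable_of_integrable_dist {K : NNReal} {f : S → ℝ}
    (hf : LipschitzWith K f) {P : Measure S} [IsFiniteMeasure P] (a : S)
    (ha : Integrable (fun x => dist a x) P) : Integrable f P := by
  refine ((integrable_const |f a|).add (ha.const_mul K)).mono' hf.continuous.aestronglyMeasurable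
    (Eventually.of_forall fun x => ?_)
  have := hf.dist_le_mul x a
  rw [Real.dist_eq, dist_comm] at this
  rw [Real.norm_eq_abs, Pi.add_apply]
  linarith [abs_sub_abs_le_abs_sub (f x) (f a)]

lemma abs_integral_sub_le_integral_dist {f : S → ℝ} (hf : LipschitzWith 1 f) {P : Measure S}
    [IsProbabilityMeasure P] (a : S) (ha : Integrable (fun x => dist a x) P) :
    |(∫ x, f x ∂P) - f a| ≤ ∫ x, dist a x ∂P := by
  have hfi := hf.integrable_of_integrable_dist a ha
  have hsub : (∫ x, f x ∂P) - f a = ∫ x, (f x - f a) ∂P := by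
    simp [integral_sub hfi (integrable_const _)]
  rw [hsub]
  refine abs_integral_le_integral_abs.trans
    (integral_mono (hfi.sub (integrable_const _)).abs ha fun x => ?_)
  rw [dist_comm]
  simpa [Real.dist_eq] using hf.dist_le_mul x a

lemma integral_dist_le_dist_add_integral_dist {P : Measure S} [IsProbabilityMeasure P] (a b : S)
    (hb : Integrable (fun x => dist b x) P) :
    ∫ x, dist a x ∂P ≤ dist a b + ∫ x, dist b x ∂P := by
  have := abs_integral_sub_le_integral_dist (LipschitzWith.dist_right a) b hb
  linarith [le_abs_self ((∫ x, dist a x ∂P) - dist a b)]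

lemma abs_integral_sub_integral_le_integral_dist_add {P Q : Measure S} (hP : P ∈ P1 S)
    (hQ : Q ∈ P1 S) {f : S → ℝ} (hf : LipschitzWith 1 f) (a : S) :
    |(∫ x, f x ∂P) - ∫ x, f x ∂Q| ≤ (∫ x, dist a x ∂P) + ∫ x, dist a x ∂Q := by
  have := hP.1
  have := hQ.1
  calc |(∫ x, f x ∂P) - ∫ x, f x ∂Q|
      ≤ |(∫ x, f x ∂P) - f a| + |f a - ∫ x, f x ∂Q| := abs_sub_le _ _ _
    _ = |(∫ x, f x ∂P) - f a| + |(∫ x, f x ∂Q) - f a| := by rw [abs_sub_comm (f a)]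
    _ ≤ _ := add_le_add (abs_integral_sub_le_integral_dist hf a (hP.2 a))
        (abs_integral_sub_le_integral_dist hf a (hQ.2 a))

lemma abs_integral_sub_integral_le_W {P Q : Measure S} (hP : P ∈ P1 S) (hQ : Q ∈ P1 S)
    {f : S → ℝ} (hf : LipschitzWith 1 f) :
    |(∫ x, f x ∂P) - ∫ x, f x ∂Q| ≤ W P Q := by
  have := hP.1
  obtain ⟨a⟩ := nonempty_of_isProbabilityMeasure P
  refine le_csSup ⟨(∫ x, dist a x ∂P) + ∫ x, dist a x ∂Q, ?_⟩ ⟨f, hf, rfl⟩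
  rintro _ ⟨g, hg, rfl⟩
  exact abs_integral_sub_integral_le_integral_dist_add hP hQ hg a

lemma W_le_integral_dist_add_integral_dist {P Q : Measure S} (hP : P ∈ P1 S) (hQ : Q ∈ P1 S)
    (a : S) : W P Q ≤ (∫ x, dist a x ∂P) + ∫ x, dist a x ∂Q :=
  W_le_of_forall (add_nonneg (integral_nonneg fun _ => dist_nonneg)
    (integral_nonneg fun _ => dist_nonneg)) fun _ hf =>
    abs_integral_sub_integral_le_integral_dist_add hP hQ hf a

lemma W_triangle {P Q R : Measure S} (hP : P ∈ P1 S) (hQ : Q ∈ P1 S) (hR : R ∈ P1 S) :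
    W P R ≤ W P Q + W Q R :=
  W_le_of_forall (add_nonneg (W_nonneg P Q) (W_nonneg Q R)) fun _ hf =>
    (abs_sub_le _ _ _).trans (add_le_add (abs_integral_sub_integral_le_W hP hQ hf)
      (abs_integral_sub_integral_le_W hQ hR hf))

lemma dirac_mem_P1 (a : S) : Measure.dirac a ∈ P1 S :=
  ⟨inferInstance, fun _ => integrable_dirac enorm_lt_top⟩

lemma integral_dist_le_W_dirac {P : Measure S} (hP : P ∈ P1 S) (a : S) :
    ∫ x, dist a x ∂P ≤ W P (Measure.dirac a) := by
  have := abs_integral_sub_integral_le_W hP (dirac_mem_P1 a) (LipschitzWith.dist_right a)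
  rwa [integral_dirac, dist_self, sub_zero, abs_of_nonneg (integral_nonneg fun _ => dist_nonneg)]
    at this

end Wasserstein

section Transport

variable {S : Type*} [MetricSpace S] [MeasurableSpace S] [OpensMeasurableSpace S]

lemma map_mem_P1 {P : Measure S} (hP : P ∈ P1 S) {T : S → S} (hT : Measurable T)
    (hd : Integrable (fun x => dist x (T x)) P) : P.map T ∈ P1 S := by
  have := hP.1
  refine ⟨Measure.isProbabilityMeasure_map hT.aemeasurable, fun a => ?_⟩
  have hdist := (LipschitzWith.dist_right a).continuous
  rw [integrable_map_measure hdist.aestronglyMeasurable hT.aemeasurable]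
  refine ((hP.2 a).add hd).mono' (hdist.measurable.comp hT).aestronglyMeasurable
    (Eventually.of_forall fun x => ?_)
  simpa using dist_triangle a x (T x)

lemma W_map_le_integral_dist {P : Measure S} (hP : P ∈ P1 S) {T : S → S} (hT : Measurable T)
    (hd : Integrable (fun x => dist x (T x)) P) :
    W P (P.map T) ≤ ∫ x, dist x (T x) ∂P := by
  have := hP.1
  have hPT := map_mem_P1 hP hT hd
  obtain ⟨a⟩ := nonempty_of_isProbabilityMeasure P
  refine W_le_of_forall (integral_nonneg fun _ => dist_nonneg) fun f hf => ?_
  have hfP := hf.integrable_of_integrable_dist a (hP.2 a)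
  have hfT : Integrable (fun x => f (T x)) P := by
    have := hPT.1
    exact (integrable_map_measure hf.continuous.aestronglyMeasurable hT.aemeasurable).1
      (hf.integrable_of_integrable_dist a (hPT.2 a))
  rw [integral_map hT.aemeasurable hf.continuous.aestronglyMeasurable, ← integral_sub hfP hfT]
  refine abs_integral_le_integral_abs.trans (integral_mono (hfP.sub hfT).abs hd fun x => ?_)
  simpa [Real.dist_eq] using hf.dist_le_mul x (T x)

end Transport

section FinitelySupported

variable {S : Type*} [MetricSpace S] [MeasurableSpace S] [OpensMeasurableSpace S]

lemma integral_eq_sum_of_measure_compl_eq_zero {ν : Measure S} {t : Finset S}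
    (ht : ν (↑t)ᶜ = 0) {f : S → ℝ} (hf : Integrable f ν) :
    ∫ x, f x ∂ν = ∑ y ∈ t, ν.real {y} * f y := by
  have hres : ν.restrict t = ν := Measure.restrict_eq_self_of_ae_mem (ae_iff.2 ht)
  calc ∫ x, f x ∂ν = ∫ x in (t : Set S), f x ∂ν := by rw [hres]
    _ = ∑ y ∈ t, ν.real {y} * f y := setIntegral_finset t hf.integrableOn

lemma W_le_sum_of_measure_compl_eq_zero {ν ν' : Measure S} (hν : ν ∈ P1 S) (hν' : ν' ∈ P1 S)
    {t : Finset S} (ht : ν (↑t)ᶜ = 0) (ht' : ν' (↑t)ᶜ = 0) (a : S) :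
    W ν ν' ≤ ∑ y ∈ t, |ν.real {y} - ν'.real {y}| * dist a y := by
  refine W_le_of_forall
    (Finset.sum_nonneg fun _ _ => mul_nonneg (abs_nonneg _) dist_nonneg) fun f hf => ?_
  have hcentered : ∀ μ ∈ P1 S, μ (↑t)ᶜ = 0 →
      (∫ x, f x ∂μ) - f a = ∑ y ∈ t, μ.real {y} * (f y - f a) := by
    intro μ hμ hμt
    have := hμ.1
    have hfi := hf.integrable_of_integrable_dist a (hμ.2 a)
    rw [← integral_eq_sum_of_measure_compl_eq_zero hμt (f := fun x => f x - f a)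
      (hfi.sub (integrable_const _))]
    simp [integral_sub hfi (integrable_const _)]
  calc |(∫ x, f x ∂ν) - ∫ x, f x ∂ν'|
      = |((∫ x, f x ∂ν) - f a) - ((∫ x, f x ∂ν') - f a)| := by rw [sub_sub_sub_cancel_right]
    _ = |∑ y ∈ t, (ν.real {y} - ν'.real {y}) * (f y - f a)| := by
        rw [hcentered ν hν ht, hcentered ν' hν' ht', ← Finset.sum_sub_distrib]
        simp only [sub_mul]
    _ ≤ ∑ y ∈ t, |ν.real {y} - ν'.real {y}| * |f y - f a| := by
        simpa only [abs_mul] using Finset.abs_sum_le_sum_abs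
          (fun y => (ν.real {y} - ν'.real {y}) * (f y - f a)) t
    _ ≤ ∑ y ∈ t, |ν.real {y} - ν'.real {y}| * dist a y := by
        gcongr with y
        rw [dist_comm]
        simpa [Real.dist_eq] using hf.dist_le_mul y a

lemma exists_finite_W_net [Nonempty S] (t : Finset S) {ε : ℝ} (hε : 0 < ε) :
    ∃ F ⊆ {ν ∈ P1 S | ν (↑t)ᶜ = 0}, F.Finite ∧
      ∀ ν ∈ P1 S, ν (↑t)ᶜ = 0 → ∃ Q ∈ F, W ν Q ≤ ε := by
  obtain ⟨a⟩ := ‹Nonempty S›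
  set A := {ν ∈ P1 S | ν (↑t)ᶜ = 0}
  let weights : Measure S → (t → ℝ) := fun ν y => ν.real {(y : S)}
  set D := ∑ y ∈ t, dist a y
  have hD : 0 ≤ D := Finset.sum_nonneg fun _ _ => dist_nonneg
  set δ := ε / (D + 1)
  have hδ : 0 < δ := by positivity
  have hbdd : TotallyBounded (weights '' A) := by
    refine (isCompact_closedBall (0 : t → ℝ) 1).totallyBounded.subset ?_
    rintro _ ⟨ν, hν, rfl⟩
    have := hν.1.1
    rw [mem_closedBall_zero_iff, pi_norm_le_iff_of_nonneg zero_le_one]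
    intro y
    rw [Real.norm_eq_abs, abs_of_nonneg measureReal_nonneg]
    exact measureReal_le_one
  obtain ⟨F, hFA, hFfin, hcov⟩ := exists_subset_image_finite_and.1
    (totallyBounded_iff_subset.1 hbdd _ (dist_mem_uniformity hδ))
  refine ⟨F, hFA, hFfin, fun ν hν hνt => ?_⟩
  obtain ⟨_, ⟨Q, hQF, rfl⟩, hνQ⟩ := mem_iUnion₂.1 (hcov ⟨ν, ⟨hν, hνt⟩, rfl⟩)
  refine ⟨Q, hQF, (W_le_sum_of_measure_compl_eq_zero hν (hFA hQF).1 hνt (hFA hQF).2 a).trans ?_⟩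
  calc ∑ y ∈ t, |ν.real {y} - Q.real {y}| * dist a y ≤ ∑ y ∈ t, δ * dist a y := by
        refine Finset.sum_le_sum fun y hy => mul_le_mul_of_nonneg_right ?_ dist_nonneg
        rw [← Real.dist_eq]
        exact ((dist_le_pi_dist (weights ν) (weights Q) ⟨y, hy⟩).trans (le_of_lt hνQ))
    _ = δ * D := by rw [Finset.mul_sum]
    _ ≤ ε := by
        rw [div_mul_eq_mul_div, div_le_iff₀ (by positivity)]
        nlinarith

end FinitelySupported

section Tight

variable {S : Type*} [MetricSpace S] [MeasurableSpace S] [OpensMeasurableSpace S]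

lemma exists_simpleFunc_dist_lt_of_isCompact {K : Set S} (hK : IsCompact K) (a : S) {ε : ℝ}
    (hε : 0 < ε) :
    ∃ T : SimpleFunc S S, (∀ x ∈ K, dist x (T x) < ε) ∧ ∀ x, dist x (T x) ≤ dist x a := by
  obtain ⟨c, -, hc, hKc⟩ := hK.finite_cover_balls hε
  let l := a :: hc.toFinset.toList
  let e : ℕ → S := fun i => l.getD i a
  let T := SimpleFunc.nearestPt e l.length
  have hnear : ∀ x, ∀ k ≤ l.length, dist x (T x) ≤ dist x (e k) := fun x k hk => by
    have := SimpleFunc.edist_nearestPt_le e x hk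
    rw [edist_dist, edist_dist, ENNReal.ofReal_le_ofReal_iff dist_nonneg] at this
    simpa only [dist_comm x] using this
  refine ⟨T, fun x hx => ?_, fun x => hnear x 0 (Nat.zero_le _)⟩
  obtain ⟨y, hy, hxy⟩ := mem_iUnion₂.1 (hKc hx)
  obtain ⟨k, hk, rfl⟩ := List.mem_iff_getElem.1
    (List.mem_cons_of_mem a (Finset.mem_toList.2 (hc.mem_toFinset.2 hy)))
  have := hnear x k hk.le
  rw [show e k = l[k] from List.getD_eq_getElem l a hk] at this
  exact this.trans_lt hxy

lemma MeasureTheory.SimpleFunc.integrable_dist_apply {P : Measure S} (T : SimpleFunc S S) {a : S}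
    (hTa : ∀ x, dist x (T x) ≤ dist x a) (ha : Integrable (fun x => dist a x) P) :
    Integrable (fun x => dist x (T x)) P :=
  ha.mono' (T.measurable_bind (fun y x => dist x y)
    fun y => (LipschitzWith.dist_left y).continuous.measurable).aestronglyMeasurable
    (Eventually.of_forall fun x => by
      rw [Real.norm_of_nonneg dist_nonneg, dist_comm a]
      exact hTa x)

lemma integral_dist_apply_le {P : Measure S} [IsProbabilityMeasure P] {T : S → S} {K : Set S}
    (hK : MeasurableSet K) {a : S} {R ε : ℝ} (hR : 0 ≤ R) (hε : 0 ≤ ε)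
    (hTK : ∀ x ∈ K, dist x (T x) ≤ ε) (hTa : ∀ x, dist x (T x) ≤ dist x a)
    (hd : Integrable (fun x => dist x (T x)) P) (ha : Integrable (fun x => dist a x) P) :
    ∫ x, dist x (T x) ∂P ≤ ε + R * P.real Kᶜ + ∫ x in (closedBall a R)ᶜ, dist a x ∂P := by
  have hB : MeasurableSet (closedBall a R)ᶜ := isClosed_closedBall.measurableSet.compl
  have hbound : ∀ x, dist x (T x) ≤
      ε + Kᶜ.indicator (fun _ => R) x + (closedBall a R)ᶜ.indicator (fun x => dist a x) x := by
    intro x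
    have h1 : 0 ≤ Kᶜ.indicator (fun _ => R) x := indicator_nonneg (fun _ _ => hR) x
    have h2 : 0 ≤ (closedBall a R)ᶜ.indicator (fun x => dist a x) x :=
      indicator_nonneg (fun _ _ => dist_nonneg) x
    by_cases hxK : x ∈ K
    · linarith [hTK x hxK]
    by_cases hxB : x ∈ closedBall a R
    · rw [indicator_of_mem (show x ∈ Kᶜ from hxK)]
      linarith [hTa x, mem_closedBall.1 hxB]
    · rw [indicator_of_mem (show x ∈ (closedBall a R)ᶜ from hxB), dist_comm a x]
      linarith [hTa x]
  have hKi : Integrable (Kᶜ.indicator fun _ => R) P := (integrable_const R).indicator hK.compl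
  calc ∫ x, dist x (T x) ∂P
      ≤ ∫ x, (ε + Kᶜ.indicator (fun _ => R) x
          + (closedBall a R)ᶜ.indicator (fun x => dist a x) x) ∂P :=
        integral_mono hd (((integrable_const ε).add hKi).add (ha.indicator hB)) hbound
    _ = ε + R * P.real Kᶜ + ∫ x in (closedBall a R)ᶜ, dist a x ∂P := by
        rw [integral_add (f := fun x => ε + Kᶜ.indicator (fun _ => R) x)
            ((integrable_const ε).add hKi) (ha.indicator hB),
          integral_add (integrable_const ε) hKi, integral_indicator_const _ hK.compl,
          integral_indicator hB]
        simp [mul_comm]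

lemma W_map_simpleFunc_le {P : Measure S} (hP : P ∈ P1 S) (T : SimpleFunc S S) {K : Set S}
    (hK : MeasurableSet K) {a : S} {R ε : ℝ} (hR : 0 ≤ R) (hε : 0 ≤ ε)
    (hTK : ∀ x ∈ K, dist x (T x) ≤ ε) (hTa : ∀ x, dist x (T x) ≤ dist x a) :
    P.map T ∈ P1 S ∧
      W P (P.map T) ≤ ε + R * P.real Kᶜ + ∫ x in (closedBall a R)ᶜ, dist a x ∂P := by
  have := hP.1
  have hd := T.integrable_dist_apply hTa (hP.2 a)
  exact ⟨map_mem_P1 hP T.measurable hd, (W_map_le_integral_dist hP T.measurable hd).trans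
    (integral_dist_apply_le hK hR hε hTK hTa hd (hP.2 a))⟩

lemma exists_W_net_of_tight {Γ : Set (Measure S)} (hΓ : Γ ⊆ P1 S)
    (htight : ∀ ε : ℝ, 0 < ε → ∃ K : Set S, IsCompact K ∧ ∀ P ∈ Γ, P Kᶜ < ENNReal.ofReal ε)
    (a : S) {R r : ℝ} (hR : 0 ≤ R) (hr : ∀ P ∈ Γ, ∫ x in (closedBall a R)ᶜ, dist a x ∂P ≤ r)
    {ε : ℝ} (hε : 0 < ε) :
    ∃ Φ : Finset (Measure S), Φ.Nonempty ∧ ↑Φ ⊆ P1 S ∧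
      ∀ P ∈ Γ, ∃ Q ∈ Φ, W P Q ≤ r + 3 * ε := by
  have : Nonempty S := ⟨a⟩
  obtain ⟨K, hK, hKc⟩ := htight (ε / (R + 1)) (by positivity)
  obtain ⟨T, hTK, hTa⟩ := exists_simpleFunc_dist_lt_of_isCompact hK a hε
  have hmassK : ∀ P ∈ Γ, R * P.real Kᶜ ≤ ε := fun P hP => by
    have hK' : P.real Kᶜ ≤ ε / (R + 1) :=
      ENNReal.toReal_le_of_le_ofReal (by positivity) (hKc P hP).le
    calc R * P.real Kᶜ ≤ (R + 1) * (ε / (R + 1)) :=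
          mul_le_mul (by linarith) hK' measureReal_nonneg (by positivity)
      _ = ε := mul_div_cancel₀ ε (by positivity)
  have hmap : ∀ P ∈ Γ, P.map T ∈ P1 S ∧ W P (P.map T) ≤ r + 2 * ε := fun P hP => by
    obtain ⟨hPT, hW⟩ := W_map_simpleFunc_le (hΓ hP) T hK.isClosed.measurableSet hR hε.le
      (fun x hx => (hTK x hx).le) hTa
    exact ⟨hPT, by linarith [hmassK P hP, hr P hP]⟩
  have hsupp : ∀ P : Measure S, P.map T (↑T.range)ᶜ = 0 := fun P => by
    rw [Measure.map_apply T.measurable T.range.measurableSet.compl]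
    convert measure_empty (μ := P)
    ext x
    simp
  obtain ⟨F, hFA, hFfin, hF⟩ := exists_finite_W_net T.range hε
  refine ⟨hFfin.toFinset, ?_, by rw [hFfin.coe_toFinset]; exact hFA.trans (sep_subset _ _),
    fun P hP => ?_⟩
  · obtain ⟨Q, hQ, -⟩ := hF _ (dirac_mem_P1 (T a)) (by simp)
    exact ⟨Q, hFfin.mem_toFinset.2 hQ⟩
  · obtain ⟨hPT, hWT⟩ := hmap P hP
    obtain ⟨Q, hQ, hWQ⟩ := hF _ hPT (hsupp P)
    refine ⟨Q, hFfin.mem_toFinset.2 hQ, ?_⟩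
    linarith [W_triangle (hΓ hP) hPT (hFA hQ).1]

end Tight

section Infima

variable {S : Type*} [MetricSpace S] [MeasurableSpace S]

lemma sInf_W_le (P : Measure S) {Φ : Finset (Measure S)} {Q : Measure S} (hQ : Q ∈ Φ) :
    sInf {t : ℝ | ∃ Q ∈ Φ, t = W P Q} ≤ W P Q :=
  csInf_le ⟨0, by rintro _ ⟨Q', -, rfl⟩; exact W_nonneg P Q'⟩ ⟨Q, hQ, rfl⟩

lemma exists_sInf_W_eq (P : Measure S) {Φ : Finset (Measure S)} (hΦ : Φ.Nonempty) :
    ∃ Q ∈ Φ, sInf {t : ℝ | ∃ Q ∈ Φ, t = W P Q} = W P Q := by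
  obtain ⟨Q, hQ, hmin⟩ := Φ.exists_min_image (W P) hΦ
  exact ⟨Q, hQ, IsLeast.csInf_eq ⟨⟨Q, hQ, rfl⟩, by rintro _ ⟨Q', hQ', rfl⟩; exact hmin Q' hQ'⟩⟩

lemma sSup_sInf_W_nonneg (Γ : Set (Measure S)) (Φ : Finset (Measure S)) :
    0 ≤ sSup {s : ℝ | ∃ P ∈ Γ, s = sInf {t : ℝ | ∃ Q ∈ Φ, t = W P Q}} :=
  Real.sSup_nonneg <| by
    rintro _ ⟨P, -, rfl⟩
    exact Real.sInf_nonneg <| by rintro _ ⟨Q, -, rfl⟩; exact W_nonneg P Q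

lemma muHW_nonneg (Γ : Set (Measure S)) : 0 ≤ muHW Γ :=
  Real.sInf_nonneg <| by rintro _ ⟨Φ, -, -, rfl⟩; exact sSup_sInf_W_nonneg Γ Φ

lemma muHW_le_sSup {Γ : Set (Measure S)} {Φ : Finset (Measure S)} (hΦ : Φ.Nonempty)
    (hΦP1 : ↑Φ ⊆ P1 S) :
    muHW Γ ≤ sSup {s : ℝ | ∃ P ∈ Γ, s = sInf {t : ℝ | ∃ Q ∈ Φ, t = W P Q}} :=
  csInf_le ⟨0, by rintro _ ⟨Φ', -, -, rfl⟩; exact sSup_sInf_W_nonneg Γ Φ'⟩ ⟨Φ, hΦ, hΦP1, rfl⟩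

lemma muHW_le {Γ : Set (Measure S)} {Φ : Finset (Measure S)} (hΦ : Φ.Nonempty)
    (hΦP1 : ↑Φ ⊆ P1 S) {ρ : ℝ} (hρ : 0 ≤ ρ) (h : ∀ P ∈ Γ, ∃ Q ∈ Φ, W P Q ≤ ρ) :
    muHW Γ ≤ ρ := by
  refine (muHW_le_sSup hΦ hΦP1).trans (Real.sSup_le ?_ hρ)
  rintro _ ⟨P, hP, rfl⟩
  obtain ⟨Q, hQ, hPQ⟩ := h P hP
  exact (sInf_W_le P hQ).trans hPQ

lemma sSup_setIntegral_dist_nonneg (Γ : Set (Measure S)) (a : S) (B : Set S) :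
    0 ≤ sSup {s : ℝ | ∃ P ∈ Γ, s = ∫ x in Bᶜ, dist a x ∂P} :=
  Real.sSup_nonneg <| by rintro _ ⟨P, -, rfl⟩; exact integral_nonneg fun _ => dist_nonneg

lemma muUI_nonneg (Γ : Set (Measure S)) : 0 ≤ muUI Γ :=
  Real.sInf_nonneg <| by rintro _ ⟨a, B, -, rfl⟩; exact sSup_setIntegral_dist_nonneg Γ a B

lemma muUI_le_sSup {Γ : Set (Measure S)} (a : S) {B : Set S} (hB : Bornology.IsBounded B) :
    muUI Γ ≤ sSup {s : ℝ | ∃ P ∈ Γ, s = ∫ x in Bᶜ, dist a x ∂P} :=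
  csInf_le ⟨0, by rintro _ ⟨a', B', -, rfl⟩; exact sSup_setIntegral_dist_nonneg Γ a' B'⟩
    ⟨a, B, hB, rfl⟩

lemma muUI_le {Γ : Set (Measure S)} (a : S) {B : Set S} (hB : Bornology.IsBounded B) {ρ : ℝ}
    (hρ : 0 ≤ ρ) (h : ∀ P ∈ Γ, ∫ x in Bᶜ, dist a x ∂P ≤ ρ) : muUI Γ ≤ ρ :=
  (muUI_le_sSup a hB).trans (Real.sSup_le (by rintro _ ⟨P, hP, rfl⟩; exact h P hP) hρ)

lemma muUI_eq_zero_of_isEmpty [IsEmpty S] (Γ : Set (Measure S)) : muUI Γ = 0 := by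
  simp [muUI]

lemma muHW_eq_zero_of_isEmpty [IsEmpty S] (Γ : Set (Measure S)) : muHW Γ = 0 := by
  have hP1 : P1 S = ∅ := eq_empty_of_forall_notMem fun P hP => by
    have := hP.1
    exact (nonempty_of_isProbabilityMeasure P).elim isEmptyElim
  simp [muHW, hP1]

end Infima

section UniformIntegrability

variable {S : Type*} [MetricSpace S]

lemma lipschitzWith_max_dist_sub (a : S) (c : ℝ) :
    LipschitzWith 1 fun x => max (dist a x - c) 0 := by
  simpa using ((LipschitzWith.dist_right a).sub (LipschitzWith.const c)).max_const 0

variable [MeasurableSpace S] [OpensMeasurableSpace S]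

lemma tendsto_integral_max_dist_sub {Q : Measure S} {a : S}
    (ha : Integrable (fun x => dist a x) Q) :
    Tendsto (fun n : ℕ => ∫ x, max (dist a x - n) 0 ∂Q) atTop (𝓝 0) := by
  have hlim := tendsto_integral_of_dominated_convergence (fun x => dist a x)
    (fun n : ℕ => (lipschitzWith_max_dist_sub a n).continuous.aestronglyMeasurable) ha
    (fun n => Eventually.of_forall fun x => by
      rw [Real.norm_of_nonneg (le_max_right _ _)]
      exact max_le (by linarith [n.cast_nonneg (α := ℝ)]) dist_nonneg)
    (Eventually.of_forall fun x => tendsto_atTop_of_eventually_const (i₀ := ⌈dist a x⌉₊)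
      fun n hn => max_eq_right (sub_nonpos.2 ((Nat.le_ceil _).trans (by exact_mod_cast hn))))
  simpa using hlim

lemma exists_integral_max_dist_sub_le {Φ : Finset (Measure S)} (hΦ : ↑Φ ⊆ P1 S) (a : S)
    {ε : ℝ} (hε : 0 < ε) : ∃ n : ℕ, ∀ Q ∈ Φ, ∫ x, max (dist a x - n) 0 ∂Q ≤ ε :=
  ((eventually_all_finset Φ).2 fun _ hQ =>
    (tendsto_integral_max_dist_sub ((hΦ hQ).2 a)).eventually_le_const hε).exists

lemma setIntegral_dist_le_mul_integral_max_dist_sub {P : Measure S} [IsFiniteMeasure P] {a : S}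
    (ha : Integrable (fun x => dist a x) P) {c : ℝ} (hc : 1 < c) (n : ℝ) :
    ∫ x in (closedBall a (c * n / (c - 1)))ᶜ, dist a x ∂P ≤ c * ∫ x, max (dist a x - n) 0 ∂P := by
  have htail := (lipschitzWith_max_dist_sub a n).integrable_of_integrable_dist a ha
  calc ∫ x in (closedBall a (c * n / (c - 1)))ᶜ, dist a x ∂P
      ≤ ∫ x in (closedBall a (c * n / (c - 1)))ᶜ, c * max (dist a x - n) 0 ∂P := by
        refine setIntegral_mono_on ha.integrableOn (htail.const_mul c).integrableOn
          isClosed_closedBall.measurableSet.compl fun x hx => ?_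
        rw [mem_compl_iff, mem_closedBall, not_le, dist_comm, div_lt_iff₀ (by linarith)] at hx
        nlinarith [le_max_left (dist a x - n) 0]
    _ = c * ∫ x in (closedBall a (c * n / (c - 1)))ᶜ, max (dist a x - n) 0 ∂P :=
        integral_const_mul c _
    _ ≤ c * ∫ x, max (dist a x - n) 0 ∂P := mul_le_mul_of_nonneg_left
        (setIntegral_le_integral htail (Eventually.of_forall fun _ => le_max_right _ _))
        (by linarith)

lemma muUI_le_of_forall_exists_W_le [Nonempty S] {Γ : Set (Measure S)} (hΓ : Γ ⊆ P1 S)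
    {Φ : Finset (Measure S)} (hΦ : ↑Φ ⊆ P1 S) {ρ : ℝ} (hρ : 0 ≤ ρ)
    (h : ∀ P ∈ Γ, ∃ Q ∈ Φ, W P Q ≤ ρ) : muUI Γ ≤ ρ := by
  obtain ⟨a⟩ := ‹Nonempty S›
  refine le_of_forall_pos_le_add fun ε hε => ?_
  obtain ⟨n, hn⟩ := exists_integral_max_dist_sub_le hΦ a (half_pos hε)
  set c := (ρ + ε) / (ρ + ε / 2)
  have hc : 1 < c := (one_lt_div (by positivity)).2 (by linarith)
  refine muUI_le a (B := closedBall a (c * n / (c - 1))) isBounded_closedBall (by positivity)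
    fun P hP => ?_
  obtain ⟨Q, hQ, hPQ⟩ := h P hP
  have := (hΓ hP).1
  have hPtail : ∫ x, max (dist a x - n) 0 ∂P ≤ ρ + ε / 2 := by
    have := abs_integral_sub_integral_le_W (hΓ hP) (hΦ hQ) (lipschitzWith_max_dist_sub a n)
    linarith [le_abs_self ((∫ x, max (dist a x - n) 0 ∂P) - ∫ x, max (dist a x - n) 0 ∂Q),
      hn Q hQ]
  calc _ ≤ c * ∫ x, max (dist a x - n) 0 ∂P :=
        setIntegral_dist_le_mul_integral_max_dist_sub ((hΓ hP).2 a) hc n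
    _ ≤ c * (ρ + ε / 2) := by gcongr
    _ = ρ + ε := div_mul_cancel₀ _ (by positivity)

end UniformIntegrability

section FirstMoments

variable {S : Type*} [MetricSpace S] [MeasurableSpace S] {Γ : Set (Measure S)} {a₀ : S}

lemma muUI_eq_zero_of_not_bddAbove (hm : ¬BddAbove ((fun P => ∫ x, dist a₀ x ∂P) '' Γ)) :
    muUI Γ = 0 := by
  refine le_antisymm ((muUI_le_sSup a₀ Bornology.isBounded_empty).trans_eq
    (Real.sSup_of_not_bddAbove ?_)) (muUI_nonneg Γ)
  rintro ⟨M, hM⟩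
  refine hm ⟨M, ?_⟩
  rintro _ ⟨P, hP, rfl⟩
  simpa using hM ⟨P, hP, rfl⟩

variable [OpensMeasurableSpace S]

lemma muHW_le_of_tight (hΓ : Γ ⊆ P1 S)
    (htight : ∀ ε : ℝ, 0 < ε → ∃ K : Set S, IsCompact K ∧ ∀ P ∈ Γ, P Kᶜ < ENNReal.ofReal ε)
    (a : S) {R r : ℝ} (hR : 0 ≤ R) (hr₀ : 0 ≤ r)
    (hr : ∀ P ∈ Γ, ∫ x in (closedBall a R)ᶜ, dist a x ∂P ≤ r) : muHW Γ ≤ r := by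
  refine le_of_forall_pos_le_add fun ε hε => ?_
  obtain ⟨Φ, hΦ, hΦP1, hW⟩ := exists_W_net_of_tight hΓ htight a hR hr (ε := ε / 3) (by positivity)
  refine muHW_le hΦ hΦP1 (by positivity) fun P hP => ?_
  obtain ⟨Q, hQ, hPQ⟩ := hW P hP
  exact ⟨Q, hQ, by linarith⟩

lemma muHW_le_muUI_of_bddAbove (hΓ : Γ ⊆ P1 S)
    (htight : ∀ ε : ℝ, 0 < ε → ∃ K : Set S, IsCompact K ∧ ∀ P ∈ Γ, P Kᶜ < ENNReal.ofReal ε)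
    (hm : BddAbove ((fun P => ∫ x, dist a₀ x ∂P) '' Γ)) : muHW Γ ≤ muUI Γ := by
  refine le_csInf ⟨_, a₀, ∅, Bornology.isBounded_empty, rfl⟩ ?_
  rintro _ ⟨a, B, hB, rfl⟩
  obtain ⟨M, hM⟩ := hm
  obtain ⟨R, hR, hBR⟩ := hB.subset_closedBall_lt 0 a
  have hbdd : BddAbove {s : ℝ | ∃ P ∈ Γ, s = ∫ x in Bᶜ, dist a x ∂P} := by
    refine ⟨dist a a₀ + M, ?_⟩
    rintro _ ⟨P, hP, rfl⟩
    have := (hΓ hP).1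
    calc ∫ x in Bᶜ, dist a x ∂P ≤ ∫ x, dist a x ∂P :=
          setIntegral_le_integral ((hΓ hP).2 a) (Eventually.of_forall fun _ => dist_nonneg)
      _ ≤ dist a a₀ + ∫ x, dist a₀ x ∂P :=
          integral_dist_le_dist_add_integral_dist a a₀ ((hΓ hP).2 a₀)
      _ ≤ dist a a₀ + M := by gcongr; exact hM ⟨P, hP, rfl⟩
  refine muHW_le_of_tight hΓ htight a hR.le (sSup_setIntegral_dist_nonneg Γ a B) fun P hP => ?_
  refine (setIntegral_mono_set ((hΓ hP).2 a).integrableOn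
    (Eventually.of_forall fun _ => dist_nonneg) ?_).trans (le_csSup hbdd ⟨P, hP, rfl⟩)
  exact (compl_subset_compl.2 hBR).eventuallyLE

lemma muUI_le_muHW_of_bddAbove (hΓ : Γ ⊆ P1 S)
    (hm : BddAbove ((fun P => ∫ x, dist a₀ x ∂P) '' Γ)) : muUI Γ ≤ muHW Γ := by
  have : Nonempty S := ⟨a₀⟩
  obtain ⟨M, hM⟩ := hm
  refine le_csInf ⟨_, {Measure.dirac a₀}, Finset.singleton_nonempty _,
    by simpa using dirac_mem_P1 a₀, rfl⟩ ?_
  rintro _ ⟨Φ, ⟨Q₁, hQ₁⟩, hΦP1, rfl⟩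
  have hbdd : BddAbove {s : ℝ | ∃ P ∈ Γ, s = sInf {t : ℝ | ∃ Q ∈ Φ, t = W P Q}} := by
    refine ⟨M + ∫ x, dist a₀ x ∂Q₁, ?_⟩
    rintro _ ⟨P, hP, rfl⟩
    calc _ ≤ W P Q₁ := sInf_W_le P hQ₁
      _ ≤ (∫ x, dist a₀ x ∂P) + ∫ x, dist a₀ x ∂Q₁ :=
          W_le_integral_dist_add_integral_dist (hΓ hP) (hΦP1 hQ₁) a₀
      _ ≤ M + ∫ x, dist a₀ x ∂Q₁ := by gcongr; exact hM ⟨P, hP, rfl⟩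
  refine muUI_le_of_forall_exists_W_le hΓ hΦP1 (sSup_sInf_W_nonneg Γ Φ) fun P hP => ?_
  obtain ⟨Q, hQ, hQeq⟩ := exists_sInf_W_eq P ⟨Q₁, hQ₁⟩
  exact ⟨Q, hQ, hQeq ▸ le_csSup hbdd ⟨P, hP, rfl⟩⟩

lemma muHW_eq_zero_of_not_bddAbove (hΓ : Γ ⊆ P1 S)
    (hm : ¬BddAbove ((fun P => ∫ x, dist a₀ x ∂P) '' Γ)) : muHW Γ = 0 := by
  refine le_antisymm ?_ (muHW_nonneg Γ)
  refine (muHW_le_sSup (Finset.singleton_nonempty (Measure.dirac a₀))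
    (by simpa using dirac_mem_P1 a₀)).trans_eq (Real.sSup_of_not_bddAbove ?_)
  rintro ⟨M, hM⟩
  refine hm ⟨M, ?_⟩
  rintro _ ⟨P, hP, rfl⟩
  obtain ⟨Q, hQ, hQeq⟩ := exists_sInf_W_eq P (Finset.singleton_nonempty (Measure.dirac a₀))
  rw [Finset.mem_singleton.1 hQ] at hQeq
  exact (integral_dist_le_W_dirac (hΓ hP) a₀).trans (hQeq ▸ hM ⟨P, hP, rfl⟩)

end FirstMoments

theorem muHW_le_muUI_of_tight_general
    {S : Type*} [MetricSpace S]
    [MeasurableSpace S] [BorelSpace S]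
    (Γ : Set (Measure S)) (hΓ : Γ ⊆ P1 S)
    (htight : ∀ ε : ℝ, 0 < ε → ∃ K : Set S, IsCompact K ∧
      ∀ P ∈ Γ, P Kᶜ < ENNReal.ofReal ε) :
    muHW Γ ≤ muUI Γ ∧ muHW Γ = muUI Γ := by
  rcases isEmpty_or_nonempty S with hS | ⟨⟨a₀⟩⟩
  · simp [muHW_eq_zero_of_isEmpty, muUI_eq_zero_of_isEmpty]
  have heq : muHW Γ = muUI Γ := by
    by_cases hm : BddAbove ((fun P => ∫ x, dist a₀ x ∂P) '' Γ)
    · exact (muHW_le_muUI_of_bddAbove hΓ htight hm).antisymm (muUI_le_muHW_of_bddAbove hΓ hm)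
    · rw [muHW_eq_zero_of_not_bddAbove hΓ hm, muUI_eq_zero_of_not_bddAbove hm]
  exact ⟨heq.le, heq⟩

/-- If `Γ ⊆ 𝒫¹(S)` is tight, then `μ_{H,W}(Γ) ≤ μ_UI(Γ)`, and consequently
`μ_{H,W}(Γ) = μ_UI(Γ)`. -/
theorem muHW_le_muUI_of_tight
    {S : Type*} [MetricSpace S] [CompleteSpace S] [TopologicalSpace.SeparableSpace S]
    [MeasurableSpace S] [BorelSpace S]
    (Γ : Set (Measure S)) (hΓ : Γ ⊆ P1 S)
    (htight : ∀ ε : ℝ, 0 < ε → ∃ K : Set S, IsCompact K ∧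
      ∀ P ∈ Γ, P Kᶜ < ENNReal.ofReal ε) :
    muHW Γ ≤ muUI Γ ∧ muHW Γ = muUI Γ :=
  muHW_le_muUI_of_tight_general Γ hΓ htight
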